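/- arXiv:1405.7553 — 3 statements merged into one kernel-verified Lean document; each statement's English description precedes it below -/
import Mathlib

section
/- The Jacobi triple product identity holds: (∑_{n∈ℤ} t^n q^{n²/2}) / ∏_{n≥1}(1−q^n) = ∏_{n≥1}(1+t q^{n−1/2})(1+t^{−1} q^{n−1/2}), as an identity of formal power series (equivalently, after substituting q = u², ∑_{n∈ℤ} t^n u^{n²} = ∏_{n≥1}(1−u^{2n})(1+t u^{2n−1})(1+t^{−1} u^{2n−1})). -/
/-!
By induction on `m`, using the two `q`-Pascal rules, one proves the finite form
`∏_{j<m} (1 + z X^{2j+1}) (1 + z⁻¹ X^{2j+1}) = ∑_{|n| ≤ m} zⁿ [2m, m+n]_{X²} X^{n²}`.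
Multiplying by `∏_{j ≤ N} (1 - X^{2j})` turns `[2N, N+n]_{X²}` into a product of factors
`1 - X^{2j}` with `j > N - |n|`, which is `1` modulo `X^{2(N - |n| + 1)}`. Since
`N - n² < 2(N - |n| + 1)`, the coefficient of `X^N` only sees the `n` with `n² = N`.
-/

open Finset PowerSeries LaurentPolynomial
open scoped nonZeroDivisors

section QBinomial

variable {R : Type*} [CommRing R] (q : R)

/-- The Gaussian binomial coefficient `[a, k]_q`, defined for all `k : ℤ` (it vanishes unless
`0 ≤ k ≤ a`). -/
def qBinom : ℕ → ℤ → R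
  | 0, k => if k = 0 then 1 else 0
  | a + 1, k => qBinom a (k - 1) + q ^ k.toNat * qBinom a k

lemma qBinom_succ (a : ℕ) (k : ℤ) :
    qBinom q (a + 1) k = qBinom q a (k - 1) + q ^ k.toNat * qBinom q a k := rfl

lemma qBinom_of_neg : ∀ {a : ℕ} {k : ℤ}, k < 0 → qBinom q a k = 0
  | 0, _, hk => if_neg hk.ne
  | _ + 1, _, hk => by
    rw [qBinom_succ, qBinom_of_neg (by omega), qBinom_of_neg hk, mul_zero, add_zero]

lemma qBinom_of_lt : ∀ {a : ℕ} {k : ℤ}, (a : ℤ) < k → qBinom q a k = 0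
  | 0, _, hk => if_neg (by omega)
  | _ + 1, _, hk => by
    rw [qBinom_succ, qBinom_of_lt (by omega), qBinom_of_lt (by omega), mul_zero, add_zero]

@[simp] lemma qBinom_zero_right : ∀ a : ℕ, qBinom q a 0 = 1
  | 0 => if_pos rfl
  | a + 1 => by rw [qBinom_succ, qBinom_of_neg q (by norm_num), qBinom_zero_right a]; simp

lemma qBinom_succ_succ (a b : ℕ) :
    qBinom q (a + 1) (b + 1 : ℕ) = qBinom q a b + q ^ (b + 1) * qBinom q a (b + 1 : ℕ) := by
  rw [qBinom_succ, Nat.cast_succ, add_sub_cancel_right, Int.toNat_natCast_add_one]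

theorem qBinom_mul_prod_range (a b : ℕ) :
    qBinom q a b * ∏ j ∈ range b, (1 - q ^ (j + 1)) = ∏ j ∈ range b, (1 - q ^ (a - j)) := by
  induction a generalizing b with
  | zero =>
    cases b with
    | zero => simp
    | succ b => rw [prod_range_succ', qBinom_of_lt q (by omega)]; simp
  | succ a ih =>
    cases b with
    | zero => simp
    | succ b =>
      rw [qBinom_succ_succ, prod_range_succ, prod_range_succ' (fun j => 1 - q ^ (a + 1 - j))]
      simp only [Nat.add_sub_add_right, Nat.sub_zero]
      have hb := ih b
      have hb' := ih (b + 1)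
      rw [prod_range_succ, prod_range_succ] at hb'
      rcases le_or_gt b a with hba | hab
      · have hexp : q ^ (b + 1) * q ^ (a - b) = q ^ (a + 1) := by
          rw [← pow_add]; congr 1; omega
        linear_combination (1 - q ^ (b + 1)) * hb + q ^ (b + 1) * hb' -
          (∏ j ∈ range b, (1 - q ^ (a - j))) * hexp
      · rw [qBinom_of_lt q (by omega : (a : ℤ) < b),
          qBinom_of_lt q (by omega : (a : ℤ) < (b + 1 : ℕ)),
          prod_eq_zero (f := fun j => 1 - q ^ (a - j)) (mem_range.2 hab) (by simp)]
        ring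

section Regular

variable (hq : ∀ j : ℕ, 1 - q ^ (j + 1) ∈ R⁰)
include hq

theorem qBinom_mul_one_sub_pow (a : ℕ) (k : ℤ) :
    qBinom q a k * (1 - q ^ k.toNat) =
      qBinom q a (k - 1) * (1 - q ^ ((a : ℤ) + 1 - k).toNat) := by
  rcases le_or_gt k 0 with hk | hk
  · rw [Int.toNat_of_nonpos hk, qBinom_of_neg q (by omega : k - 1 < 0)]; simp
  rcases le_or_gt ((a : ℤ) + 1) k with hk' | hk'
  · rw [qBinom_of_lt q (by omega : (a : ℤ) < k),
      Int.toNat_of_nonpos (show (a : ℤ) + 1 - k ≤ 0 by omega)]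
    simp
  obtain ⟨b, rfl⟩ : ∃ b : ℕ, k = b + 1 := ⟨k.toNat - 1, by omega⟩
  have hD : ∏ j ∈ range b, (1 - q ^ (j + 1)) ∈ R⁰ := prod_mem fun j _ => hq j
  rw [← mul_cancel_right_mem_nonZeroDivisors hD, add_sub_cancel_right,
    show ((a : ℤ) + 1 - (b + 1)).toNat = a - b by omega,
    show ((b : ℤ) + 1).toNat = b + 1 by omega]
  have h1 := qBinom_mul_prod_range q a b
  have h2 := qBinom_mul_prod_range q a (b + 1)
  rw [prod_range_succ, prod_range_succ, Nat.cast_succ] at h2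
  linear_combination h2 - (1 - q ^ (a - b)) * h1

theorem qBinom_succ' (a : ℕ) (k : ℤ) :
    qBinom q (a + 1) k = q ^ ((a : ℤ) + 1 - k).toNat * qBinom q a (k - 1) + qBinom q a k := by
  rw [qBinom_succ]
  linear_combination -qBinom_mul_one_sub_pow q hq a k

theorem qBinom_symm : ∀ (a : ℕ) (k : ℤ), qBinom q a (a - k) = qBinom q a k
  | 0, k => by simp [qBinom]
  | a + 1, k => by
    rw [qBinom_succ' q hq, qBinom_succ,
      show (a : ℤ) + 1 - ((a + 1 : ℕ) - k) = k by push_cast; ring,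
      show ((a + 1 : ℕ) : ℤ) - k - 1 = a - k by push_cast; ring,
      show ((a + 1 : ℕ) : ℤ) - k = a - (k - 1) by push_cast; ring, qBinom_symm a, qBinom_symm a]
    ring

theorem qBinom_add_two (a : ℕ) (k : ℤ) :
    qBinom q (a + 2) k = q ^ ((a : ℤ) + 2 - k).toNat * qBinom q a (k - 2) +
      (1 + q ^ (a + 1)) * qBinom q a (k - 1) + q ^ k.toNat * qBinom q a k := by
  have hmid : q ^ k.toNat * q ^ ((a : ℤ) + 1 - k).toNat * qBinom q a (k - 1) =
      q ^ (a + 1) * qBinom q a (k - 1) := by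
    rcases lt_or_ge (k - 1) 0 with hk | hk
    · simp [qBinom_of_neg q hk]
    rcases lt_or_ge (a : ℤ) (k - 1) with hk' | hk'
    · simp [qBinom_of_lt q hk']
    rw [← pow_add, show k.toNat + ((a : ℤ) + 1 - k).toNat = a + 1 by omega]
  rw [qBinom_succ q (a + 1), qBinom_succ' q hq a (k - 1), qBinom_succ' q hq a k,
    show (a : ℤ) + 1 - (k - 1) = a + 2 - k by ring, show k - 1 - 1 = k - 2 by ring]
  linear_combination hmid

end Regular

variable {q}

lemma dvd_mul_sub_one {d x y : R} (hx : d ∣ x - 1) (hy : d ∣ y - 1) : d ∣ x * y - 1 := by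
  rw [show x * y - 1 = x * (y - 1) + (x - 1) by ring]
  exact dvd_add (dvd_mul_of_dvd_right hy x) hx

lemma pow_dvd_prod_one_sub_pow_sub_one {ι : Type*} {s : Finset ι} {e : ι → ℕ} {n : ℕ}
    (h : ∀ i ∈ s, n ≤ e i) : q ^ n ∣ ∏ i ∈ s, (1 - q ^ e i) - 1 :=
  prod_induction _ (fun x => q ^ n ∣ x - 1) (fun _ _ => dvd_mul_sub_one) (by simp)
    fun i hi => by simpa using pow_dvd_pow q (h i hi)

theorem pow_dvd_qBinom_mul_prod_sub_one {a b c : ℕ} (hbc : b ≤ c) (hba : 2 * b ≤ a) :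
    q ^ (b + 1) ∣ qBinom q a b * ∏ j ∈ range c, (1 - q ^ (j + 1)) - 1 := by
  rw [← prod_range_mul_prod_Ico _ hbc, ← mul_assoc, qBinom_mul_prod_range]
  refine dvd_mul_sub_one (pow_dvd_prod_one_sub_pow_sub_one fun j hj => ?_)
    (pow_dvd_prod_one_sub_pow_sub_one fun j hj => ?_)
  · rw [mem_range] at hj; omega
  · rw [mem_Ico] at hj; omega

end QBinomial

theorem Finset.sum_Icc_add' {α M : Type*} [AddCommMonoid α] [PartialOrder α]
    [IsOrderedCancelAddMonoid α] [ExistsAddOfLE α] [LocallyFiniteOrder α] [AddCommMonoid M]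
    (f : α → M) (a b c : α) :
    ∑ x ∈ Icc a b, f (x + c) = ∑ x ∈ Icc (a + c) (b + c), f x := by
  rw [← map_add_right_Icc, sum_map]
  rfl

section FiniteProduct

variable (R : Type*) [CommRing R]

lemma one_sub_X_sq_pow_mem_nonZeroDivisors (j : ℕ) :
    1 - (X ^ 2 : R⟦X⟧) ^ (j + 1) ∈ R⟦X⟧⁰ :=
  IsUnit.mem_nonZeroDivisors (isUnit_iff_constantCoeff.2 (by simp))

noncomputable def finiteThetaCoeff (m : ℕ) (n : ℤ) : R⟦X⟧ :=
  qBinom (X ^ 2) (2 * m) (m + n) * X ^ n.natAbs ^ 2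

variable {R}

lemma finiteThetaCoeff_of_lt {m : ℕ} {n : ℤ} (h : m < n.natAbs) :
    finiteThetaCoeff R m n = 0 := by
  rcases lt_or_ge n 0 with hn | hn
  · rw [finiteThetaCoeff, qBinom_of_neg _ (by omega), zero_mul]
  · rw [finiteThetaCoeff, qBinom_of_lt _ (by omega), zero_mul]

lemma finiteThetaCoeff_succ (m : ℕ) (n : ℤ) :
    finiteThetaCoeff R (m + 1) n = (1 + X ^ (2 * (2 * m + 1))) * finiteThetaCoeff R m n +
      X ^ (2 * m + 1) * (finiteThetaCoeff R m (n - 1) + finiteThetaCoeff R m (n + 1)) := by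
  rcases lt_or_ge (m + 1) n.natAbs with h | h
  · rw [finiteThetaCoeff_of_lt h, finiteThetaCoeff_of_lt (by omega),
      finiteThetaCoeff_of_lt (by omega), finiteThetaCoeff_of_lt (by omega)]
    ring
  simp only [finiteThetaCoeff]
  rw [show 2 * (m + 1) = 2 * m + 2 by ring,
    qBinom_add_two _ (one_sub_X_sq_pow_mem_nonZeroDivisors R),
    show ((m + 1 : ℕ) : ℤ) + n - 2 = m + (n - 1) by push_cast; ring,
    show ((m + 1 : ℕ) : ℤ) + n - 1 = m + n by push_cast; ring,
    show ((m + 1 : ℕ) : ℤ) + n = m + (n + 1) by push_cast; ring]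
  have e₁ : (X ^ 2 : R⟦X⟧) ^ ((2 * m : ℕ) + 2 - (m + (n + 1))).toNat * X ^ n.natAbs ^ 2 =
      X ^ (2 * m + 1) * X ^ (n - 1).natAbs ^ 2 := by
    rw [← pow_mul, ← pow_add, ← pow_add]
    congr 1
    zify
    simp (disch := omega) only [Int.toNat_of_nonneg, sq_abs]
    ring
  have e₂ : (X ^ 2 : R⟦X⟧) ^ ((m : ℤ) + (n + 1)).toNat * X ^ n.natAbs ^ 2 =
      X ^ (2 * m + 1) * X ^ (n + 1).natAbs ^ 2 := by
    rw [← pow_mul, ← pow_add, ← pow_add]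
    congr 1
    zify
    simp (disch := omega) only [Int.toNat_of_nonneg, sq_abs]
    ring
  linear_combination qBinom (X ^ 2) (2 * m) (m + (n - 1)) * e₁ +
    qBinom (X ^ 2) (2 * m) (m + (n + 1)) * e₂

noncomputable def finiteTheta (z : Rˣ) (m : ℕ) : R⟦X⟧ :=
  ∑ n ∈ Icc (-(m : ℤ)) m, PowerSeries.C (↑(z ^ n) : R) * finiteThetaCoeff R m n

lemma finiteTheta_eq_sum_Icc (z : Rˣ) {m : ℕ} {a b : ℤ} (ha : a ≤ -m) (hb : m ≤ b) :
    finiteTheta z m = ∑ n ∈ Icc a b, PowerSeries.C (↑(z ^ n) : R) * finiteThetaCoeff R m n :=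
  sum_subset (Icc_subset_Icc ha hb) fun n _ hn => by
    rw [mem_Icc] at hn
    rw [finiteThetaCoeff_of_lt (by omega), mul_zero]

lemma sum_Icc_mul_finiteThetaCoeff_add (z : Rˣ) (m : ℕ) {d : ℤ} (hd : |d| ≤ 1) :
    ∑ n ∈ Icc (-(m + 1 : ℤ)) (m + 1),
        PowerSeries.C (↑(z ^ n) : R) * finiteThetaCoeff R m (n + d) =
      PowerSeries.C (↑(z ^ (-d)) : R) * finiteTheta z m := by
  rw [abs_le] at hd
  rw [finiteTheta_eq_sum_Icc z (a := -(m + 1) + d) (b := m + 1 + d) (by omega) (by omega),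
    ← sum_Icc_add', mul_sum]
  refine sum_congr rfl fun n _ => ?_
  rw [← mul_assoc, ← map_mul, ← Units.val_mul, ← zpow_add, neg_add_cancel_comm_assoc]

theorem finiteTheta_succ (z : Rˣ) (m : ℕ) :
    finiteTheta z (m + 1) =
      finiteTheta z m * ((1 + PowerSeries.C (z : R) * X ^ (2 * m + 1)) *
        (1 + PowerSeries.C (↑z⁻¹ : R) * X ^ (2 * m + 1))) := by
  have hself := sum_Icc_mul_finiteThetaCoeff_add z m (d := 0) (by norm_num)
  have hdown := sum_Icc_mul_finiteThetaCoeff_add z m (d := -1) (by norm_num)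
  have hup := sum_Icc_mul_finiteThetaCoeff_add z m (d := 1) (by norm_num)
  simp only [add_zero, neg_zero, zpow_zero, Units.val_one, map_one, one_mul] at hself
  simp only [neg_neg, zpow_one, zpow_neg, ← sub_eq_add_neg] at hdown hup
  have hzz : PowerSeries.C (z : R) * PowerSeries.C (↑z⁻¹ : R) = 1 := by
    rw [← map_mul, Units.mul_inv, map_one]
  rw [finiteTheta, Nat.cast_succ]
  simp only [finiteThetaCoeff_succ, mul_add, sum_add_distrib, mul_left_comm _ (X ^ _ : R⟦X⟧),
    mul_left_comm _ (1 + X ^ _ : R⟦X⟧), ← mul_sum, hself, hdown, hup]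
  linear_combination -(finiteTheta z m * X ^ (2 * m + 1) * X ^ (2 * m + 1)) * hzz

theorem prod_eq_finiteTheta (z : Rˣ) (m : ℕ) :
    ∏ j ∈ range m, ((1 + PowerSeries.C (z : R) * X ^ (2 * j + 1)) *
      (1 + PowerSeries.C (↑z⁻¹ : R) * X ^ (2 * j + 1))) = finiteTheta z m := by
  induction m with
  | zero => simp [finiteTheta, finiteThetaCoeff]
  | succ m ih => rw [prod_range_succ, ih, finiteTheta_succ]

theorem coeff_finiteThetaCoeff_mul_prod {N : ℕ} {n : ℤ} (hn : n.natAbs ≤ N) :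
    coeff N (finiteThetaCoeff R N n * ∏ j ∈ range N, (1 - (X ^ 2 : R⟦X⟧) ^ (j + 1))) =
      if n ^ 2 = N then 1 else 0 := by
  have hsymm :
      qBinom (X ^ 2 : R⟦X⟧) (2 * N) (N + n) = qBinom (X ^ 2) (2 * N) (N - n.natAbs : ℕ) := by
    rcases le_or_gt 0 n with h | h
    · rw [← qBinom_symm _ (one_sub_X_sq_pow_mem_nonZeroDivisors R)]
      congr 1
      omega
    · congr 1
      omega
  have hdvd := pow_dvd_qBinom_mul_prod_sub_one (q := (X ^ 2 : R⟦X⟧)) (a := 2 * N)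
    (b := N - n.natAbs) (c := N) (by omega) (by omega)
  have hsq : 2 * n.natAbs ≤ n.natAbs ^ 2 + 1 := by nlinarith [sq_nonneg ((n.natAbs : ℤ) - 1)]
  have hcast : ((n.natAbs ^ 2 : ℕ) : ℤ) = n ^ 2 := by push_cast; exact sq_abs n
  rw [← pow_mul] at hdvd
  have hcoeff := X_pow_dvd_iff.1 hdvd (N - n.natAbs ^ 2) (by omega)
  rw [map_sub, sub_eq_zero, coeff_one] at hcoeff
  rw [finiteThetaCoeff, hsymm, mul_right_comm, coeff_mul_X_pow', hcoeff]
  simp only [← hcast, Nat.cast_inj]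
  generalize n.natAbs ^ 2 = t
  split_ifs <;> first | rfl | (exfalso; omega)

end FiniteProduct

noncomputable def LaurentPolynomial.unitT (R : Type*) [CommSemiring R] : R[T;T⁻¹]ˣ :=
  ⟨T 1, T (-1), by rw [← T_add, add_neg_cancel, T_zero],
    by rw [← T_add, neg_add_cancel, T_zero]⟩

lemma LaurentPolynomial.val_unitT_zpow (R : Type*) [CommSemiring R] (n : ℤ) :
    ((unitT R ^ n : R[T;T⁻¹]ˣ) : R[T;T⁻¹]) = T n := by
  refine Int.induction_on n ?_ (fun k ih => ?_) (fun k ih => ?_)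
  · rw [zpow_zero, Units.val_one, T_zero]
  · rw [zpow_add_one, Units.val_mul, ih, T_add]
    rfl
  · rw [zpow_sub_one, Units.val_mul, ih, T_sub]
    rfl

/-- **Jacobi triple product identity.**  After the substitution `q = u²`, it reads
`∑_{n∈ℤ} t^n u^{n²} = ∏_{n≥1} (1-u^{2n})(1+t u^{2n-1})(1+t⁻¹ u^{2n-1})` in the ring of
formal power series in `u` with coefficients in `ℤ[t,t⁻¹]`.  Since the factors with
`n > N` do not contribute to the coefficient of `u^N`, the identity is equivalent to the
following coefficientwise statement, where `T n` denotes `tⁿ` (so `T 1 = t`,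
`T (-1) = t⁻¹`). -/
theorem jacobi_triple_product (N : ℕ) :
    (PowerSeries.coeff (R := LaurentPolynomial ℤ) N)
      (PowerSeries.mk fun m =>
        ∑ n ∈ Finset.Icc (-(m : ℤ)) (m : ℤ), if n ^ 2 = (m : ℤ) then T n else 0) =
    (PowerSeries.coeff (R := LaurentPolynomial ℤ) N)
      (∏ n ∈ Finset.Icc 1 N,
        ((1 - (PowerSeries.X : PowerSeries (LaurentPolynomial ℤ)) ^ (2 * n)) *
          (1 + PowerSeries.C (R := LaurentPolynomial ℤ) (T 1) * PowerSeries.X ^ (2 * n - 1)) *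
          (1 + PowerSeries.C (R := LaurentPolynomial ℤ) (T (-1)) * PowerSeries.X ^ (2 * n - 1)))) := by
  have hprod : ∏ n ∈ Icc 1 N, ((1 - X ^ (2 * n)) * (1 + PowerSeries.C (T 1) * X ^ (2 * n - 1)) *
      (1 + PowerSeries.C (T (-1)) * X ^ (2 * n - 1))) =
      (∏ j ∈ range N, (1 - (X ^ 2 : ℤ[T;T⁻¹]⟦X⟧) ^ (j + 1))) * finiteTheta (unitT ℤ) N := by
    rw [← Ico_add_one_right_eq_Icc, prod_Ico_eq_prod_range, Nat.add_sub_cancel,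
      ← prod_eq_finiteTheta, ← prod_mul_distrib]
    refine prod_congr rfl fun j _ => ?_
    rw [show 2 * (1 + j) - 1 = 2 * j + 1 by omega]
    change _ = _ * ((1 + PowerSeries.C (T 1) * _) * (1 + PowerSeries.C (T (-1)) * _))
    ring
  rw [coeff_mk, hprod, finiteTheta, mul_sum, map_sum]
  refine sum_congr rfl fun n hn => ?_
  rw [mem_Icc] at hn
  rw [mul_left_comm, coeff_C_mul, mul_comm _ (finiteThetaCoeff _ _ _),
    coeff_finiteThetaCoeff_mul_prod (by omega), val_unitT_zpow, mul_ite, mul_one, mul_zero]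
end

section
/- For any partition ν with |ν| < m and any hook partition γ = (p,1^q), one has ∑_{j=0}^{m−1} (−1)^j N^{(m−j,1^j)}_{ν,γ} = (−1)^q · δ_{ν,∅} · δ_{|γ|,m}, where N denotes the Littlewood–Richardson coefficient. -/
open MvPolynomial

/-- A model of the ring `Λ` of symmetric functions over `ℚ`: the polynomial ring
`ℚ[h₁, h₂, …]` on the complete homogeneous symmetric functions, where the variable
`X n` represents `h_{n+1}`. -/
abbrev Lam : Type := MvPolynomial ℕ ℚ

/-- The complete homogeneous symmetric function `h_k ∈ Λ`, with the conventions
`h_0 = 1` and `h_k = 0` for `k < 0`. -/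
noncomputable def hGen (k : ℤ) : Lam :=
  if k < 0 then 0 else if k = 0 then 1 else MvPolynomial.X (k.toNat - 1)

/-- The Schur function `s_λ ∈ Λ` of a partition `λ` (written as a list of parts), defined by
the Jacobi–Trudi formula `s_λ = det (h_{λ_i - i + j})_{1 ≤ i,j ≤ ℓ(λ)}`. -/
noncomputable def schur (l : List ℕ) : Lam :=
  Matrix.det (Matrix.of fun i j : Fin l.length =>
    hGen ((l.get i : ℤ) - (i : ℕ) + (j : ℕ)))

/-- A partition, written as a weakly decreasing list of positive integers. -/
def IsPartitionList (l : List ℕ) : Prop :=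
  l.Pairwise (· ≥ ·) ∧ ∀ x ∈ l, 0 < x

/-- The hook partition `(p, 1^q)`. -/
def hookList (p q : ℕ) : List ℕ := p :: List.replicate q 1

/-!
Let `φ : Λ → ℚ[ε]` be the algebra map with `h_m ↦ ε` and `h_k ↦ 0` for every other `k ≥ 1`.
On the Jacobi–Trudi matrix of a nonempty partition `λ` the first row vanishes modulo `ε`, so the
real part of `φ(s_λ)` is `δ_{λ,∅}`, and the `ε`-part is the real determinant with that row
replaced by its `ε`-part; cycling this row to the bottom makes the matrix triangular, and its
determinant is `(-1)^j` if `λ = (m-j,1^j)` and `0` otherwise (the value of `χ^λ` on an `m`-cycle).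
Taking the `ε`-part of `φ(s_ν) φ(s_γ) = ∑ N^λ_{ν,γ} φ(s_λ)` by the Leibniz rule gives
`δ_{ν,∅} (-1)^q δ_{|γ|,m}` on the left and the alternating hook sum on the right.
-/

open TrivSqZeroExt DualNumber Matrix

lemma Matrix.det_of_succ_rows_strictLowerTriangular {R : Type*} [CommRing R] {n : ℕ}
    (B : Matrix (Fin (n + 1)) (Fin (n + 1)) R) (hB : ∀ i j, i ≠ 0 → i ≤ j → B i j = 0) :
    B.det = (-1) ^ n * B 0 (Fin.last n) * ∏ i : Fin n, B i.succ i.castSucc := by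
  have hlow : (B.submatrix (finRotate (n + 1)) id).IsLowerTriangular := by
    intro i j (hij : i < j)
    obtain ⟨i, rfl⟩ := Fin.exists_castSucc_eq.2 (Fin.ne_last_of_lt hij)
    refine hB _ _ (by simp [finRotate_apply, Fin.coeSucc_eq_succ]) ?_
    simpa [finRotate_apply, Fin.coeSucc_eq_succ] using Fin.castSucc_lt_iff_succ_le.1 hij
  have hrot := det_permute (finRotate (n + 1)) B
  rw [det_of_isLowerTriangular _ hlow, Fin.prod_univ_castSucc, sign_finRotate] at hrot
  simp only [submatrix_apply, id, finRotate_apply, Fin.coeSucc_eq_succ, Fin.last_add_one,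
    Nat.add_sub_cancel, Units.val_pow_eq_pow_val, Units.val_neg, Units.val_one] at hrot
  push_cast at hrot
  have hsq : ((-1) ^ n * (-1) ^ n : R) = 1 := by rw [← mul_pow]; simp
  calc B.det = (-1) ^ n * ((-1) ^ n * B.det) := by rw [← mul_assoc, hsq, one_mul]
    _ = _ := by rw [← hrot]; ring

lemma DualNumber.fst_det {R : Type*} [CommRing R] {n : Type*} [Fintype n] [DecidableEq n]
    (A : Matrix n n (DualNumber R)) : A.det.fst = (A.map fst).det :=
  (fstHom R R R).toRingHom.map_det A

lemma DualNumber.snd_det_of_fst_row_eq_zero {R : Type*} [CommRing R] {n : Type*} [Fintype n]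
    [DecidableEq n] (A : Matrix n n (DualNumber R)) (k : n) (hk : ∀ j, (A k j).fst = 0) :
    A.det.snd = ((A.map fst).updateRow k fun j => (A k j).snd).det := by
  -- row `k` is `ε` times a row of scalars, and `(ε * x).snd = x.fst`
  have hA : A = A.updateRow k ((ε : DualNumber R) • fun j => inl (A k j).snd) := by
    ext1 i j
    by_cases hi : i = k
    · subst hi; ext <;> simp [hk]
    · simp [hi]
  rw [congrArg (fun M => M.det.snd) hA, det_updateRow_smul, DualNumber.snd_mul, fst_det]
  simp only [fst_eps, snd_eps, zero_mul, one_mul, zero_add]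
  congr 1
  ext i j
  by_cases hi : i = k <;> simp [hi]

noncomputable def evalEps (m : ℕ) : Lam →ₐ[ℚ] DualNumber ℚ :=
  aeval fun n => if n + 1 = m then ε else 0

lemma fst_evalEps_hGen (m : ℕ) (k : ℤ) : (evalEps m (hGen k)).fst = if k = 0 then 1 else 0 := by
  unfold hGen
  split_ifs <;> simp_all [evalEps, apply_ite fst]

lemma snd_evalEps_hGen {m : ℕ} (hm : 0 < m) (k : ℤ) :
    (evalEps m (hGen k)).snd = if k = m then 1 else 0 := by
  unfold hGen
  split_ifs <;> simp_all [evalEps, apply_ite snd] <;> omega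

lemma fst_evalEps_jacobiTrudi_row_zero {n : ℕ} (g : Fin (n + 1) → ℕ) (hg : ∀ i, 0 < g i)
    (m : ℕ) (j : Fin (n + 1)) :
    (evalEps m (hGen ((g 0 : ℤ) - ((0 : Fin (n + 1)) : ℕ) + (j : ℕ)))).fst = 0 := by
  rw [fst_evalEps_hGen, if_neg]
  have := hg 0
  simp only [Fin.val_zero, Nat.cast_zero, sub_zero]
  omega

lemma fst_evalEps_det_jacobiTrudi {n : ℕ} (g : Fin (n + 1) → ℕ) (hg : ∀ i, 0 < g i) (m : ℕ) :
    (evalEps m (of fun i j : Fin (n + 1) => hGen ((g i : ℤ) - (i : ℕ) + (j : ℕ))).det).fst = 0 := by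
  rw [AlgHom.map_det, DualNumber.fst_det]
  exact det_eq_zero_of_row_eq_zero 0 fun j => fst_evalEps_jacobiTrudi_row_zero g hg m j

lemma snd_evalEps_det_jacobiTrudi {n : ℕ} (g : Fin (n + 1) → ℕ) (hg : ∀ i, 0 < g i) {m : ℕ}
    (hm : 0 < m) :
    (evalEps m (of fun i j : Fin (n + 1) => hGen ((g i : ℤ) - (i : ℕ) + (j : ℕ))).det).snd =
      (-1) ^ n * (if g 0 + n = m then 1 else 0) * ∏ i : Fin n, if g i.succ = 1 then 1 else 0 := by
  rw [AlgHom.map_det, DualNumber.snd_det_of_fst_row_eq_zero _ 0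
    (fst_evalEps_jacobiTrudi_row_zero g hg m), det_of_succ_rows_strictLowerTriangular]
  · have hlast : (g 0 : ℤ) + n = m ↔ g 0 + n = m := by omega
    have hsucc (i : Fin n) : (g i.succ : ℤ) - ((i : ℕ) + 1) + (i : ℕ) = 0 ↔ g i.succ = 1 := by
      omega
    simp [snd_evalEps_hGen hm, fst_evalEps_hGen, Fin.succ_ne_zero, hlast, hsucc]
  · intro i j hi (hij : (i : ℕ) ≤ j)
    have := hg i
    simp only [AlgHom.mapMatrix_apply, map_apply, updateRow_ne hi, of_apply, fst_evalEps_hGen]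
    exact if_neg (by omega)

lemma schur_nil : schur [] = 1 := Matrix.det_fin_zero

lemma hookList_ne_nil (p q : ℕ) : hookList p q ≠ [] := List.cons_ne_nil _ _

def hookSign (m : ℕ) (l : List ℕ) : ℤ :=
  ∑ j ∈ Finset.range m, if l = hookList (m - j) j then (-1) ^ j else 0

lemma hookSign_nil (m : ℕ) : hookSign m [] = 0 := by
  simp [hookSign, hookList]

lemma hookSign_cons {m a : ℕ} (ha : 0 < a) (t : List ℕ) :
    hookSign m (a :: t) = if (∀ x ∈ t, x = 1) ∧ a + t.length = m then (-1) ^ t.length else 0 := by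
  have hcond (j : ℕ) : a :: t = hookList (m - j) j ↔
      t.length = j ∧ ((∀ x ∈ t, x = 1) ∧ a + t.length = m) := by
    simp only [hookList, List.cons.injEq, List.eq_replicate_iff]
    constructor
    · rintro ⟨rfl, rfl, h1⟩
      exact ⟨rfl, h1, by omega⟩
    · rintro ⟨rfl, h1, rfl⟩
      exact ⟨by omega, rfl, h1⟩
  simp only [hookSign, hcond, ite_and, Finset.sum_ite_eq, Finset.mem_range]
  split_ifs <;> omega

lemma fst_evalEps_schur (m : ℕ) {l : List ℕ} (hl : ∀ x ∈ l, 0 < x) :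
    (evalEps m (schur l)).fst = if l = [] then 1 else 0 := by
  cases l with
  | nil => simp [schur_nil]
  | cons a t => exact fst_evalEps_det_jacobiTrudi (a :: t).get (fun i => hl _ (List.get_mem _ _)) m

lemma snd_evalEps_schur {m : ℕ} (hm : 0 < m) {l : List ℕ} (hl : ∀ x ∈ l, 0 < x) :
    (evalEps m (schur l)).snd = hookSign m l := by
  cases l with
  | nil => simp [schur_nil, hookSign_nil]
  | cons a t =>
    rw [hookSign_cons (hl a List.mem_cons_self)]
    refine (snd_evalEps_det_jacobiTrudi (a :: t).get (fun i => hl _ (List.get_mem _ _)) hm).trans ?_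
    simp only [Finset.prod_boole, List.forall_mem_iff_get]
    split_ifs <;> simp_all

lemma hookSign_hookList {m p : ℕ} (hp : 0 < p) (q : ℕ) :
    hookSign m (hookList p q) = if p + q = m then (-1) ^ q else 0 := by
  simp [hookList, hookSign_cons hp, List.mem_replicate]

lemma sum_mul_hookSign (m : ℕ) (N : List ℕ →₀ ℕ) :
    (N.sum fun l k => (k : ℤ) * hookSign m l) =
      ∑ j ∈ Finset.range m, (-1) ^ j * (N (hookList (m - j) j) : ℤ) := by
  simp only [hookSign, Finset.mul_sum, mul_ite, mul_zero, Finsupp.sum]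
  rw [Finset.sum_comm]
  refine Finset.sum_congr rfl fun j _ => ?_
  rw [Finset.sum_ite_eq']
  split_ifs with h
  · ring
  · simp [Finsupp.notMem_support_iff.1 h]

lemma snd_evalEps_sum_smul_schur {m : ℕ} (hm : 0 < m) (N : List ℕ →₀ ℕ)
    (hN : ∀ l ∈ N.support, ∀ x ∈ l, 0 < x) :
    (evalEps m (N.sum fun l k => (k : Lam) • schur l)).snd =
      ((∑ j ∈ Finset.range m, (-1) ^ j * (N (hookList (m - j) j) : ℤ) : ℤ) : ℚ) := by
  rw [← sum_mul_hookSign, Finsupp.sum, Finsupp.sum, map_sum, snd_sum, Int.cast_sum]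
  refine Finset.sum_congr rfl fun l hl => ?_
  simp [snd_evalEps_schur hm (hN l hl)]

theorem alternating_sum_hook_lr_coefficients_general (m p q : ℕ) (hp : 1 ≤ p)
    (ν : List ℕ) (hν : IsPartitionList ν)
    (N : List ℕ →₀ ℕ) (hsupp : ∀ l ∈ N.support, IsPartitionList l)
    (hexp : schur ν * schur (hookList p q) = N.sum fun l k => (k : Lam) • schur l) :
    ∑ j ∈ Finset.range m, (-1 : ℤ) ^ j * (N (hookList (m - j) j) : ℤ) =
      (-1 : ℤ) ^ q * (if ν = [] then 1 else 0) * (if p + q = m then 1 else 0) := by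
  rcases Nat.eq_zero_or_pos m with rfl | hm
  · rw [Finset.sum_range_zero, if_neg (show p + q ≠ 0 by omega), mul_zero]
  have hγ : ∀ x ∈ hookList p q, 0 < x := by
    simp only [hookList, List.forall_mem_cons, List.mem_replicate]
    exact ⟨hp, fun x hx => hx.2 ▸ one_pos⟩
  have key := congrArg (fun x => (evalEps m x).snd) hexp
  rw [map_mul, DualNumber.snd_mul, fst_evalEps_schur m hν.2, fst_evalEps_schur m hγ,
    snd_evalEps_schur hm hγ, hookSign_hookList hp, if_neg (hookList_ne_nil p q), mul_zero,
    add_zero, snd_evalEps_sum_smul_schur hm N fun l hl => (hsupp l hl).2] at key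
  rw [← Int.cast_inj (α := ℚ), ← key]
  split_ifs <;> simp

/-- For any partition `ν` with `|ν| < m` and any hook partition `γ = (p,1^q)`, one has
`∑_{j=0}^{m-1} (-1)^j N^{(m-j,1^j)}_{ν,γ} = (-1)^q · δ_{ν,∅} · δ_{|γ|,m}`, where `N` denotes
the Littlewood–Richardson coefficient, i.e. the structure constants of the Schur functions:
`s_ν · s_γ = ∑_λ N^λ_{ν,γ} s_λ`. -/
theorem alternating_sum_hook_lr_coefficients (m p q : ℕ) (hp : 1 ≤ p)
    (ν : List ℕ) (hν : IsPartitionList ν) (hsize : ν.sum < m)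
    (N : List ℕ →₀ ℕ) (hsupp : ∀ l ∈ N.support, IsPartitionList l)
    (hexp : schur ν * schur (hookList p q) = N.sum fun l k => (k : Lam) • schur l) :
    ∑ j ∈ Finset.range m, (-1 : ℤ) ^ j * (N (hookList (m - j) j) : ℤ) =
      (-1 : ℤ) ^ q * (if ν = [] then 1 else 0) * (if p + q = m then 1 else 0) :=
  alternating_sum_hook_lr_coefficients_general m p q hp ν hν N hsupp hexp
end

section
/- Define operators on the ring Λ of symmetric functions: h_n (multiplication by the n-th complete homogeneous symmetric function) and h*_n (its adjoint with respect to the Hall inner product, i.e. the skewing operator s_λ ↦ s_{λ/(n)}). Then for all m, n ≥ 1: h*_m ∘ h_n − h_n ∘ h*_m = h*_{m−1} ∘ h_{n−1}, where h_0 = h*_0 = identity. -/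
open MvPolynomial PowerSeries

/-- The power sum `p_n ∈ Λ` (for `n ≥ 1`). -/
noncomputable def pVar (n : ℕ) : Lam := MvPolynomial.X (n - 1)

/-- The exponential of a formal power series with vanishing constant term. -/
noncomputable def psExp (F : PowerSeries Lam) : PowerSeries Lam :=
  PowerSeries.mk fun N =>
    ∑ k ∈ Finset.range (N + 1), (k.factorial : ℚ)⁻¹ • PowerSeries.coeff N (F ^ k)

/-- The complete homogeneous symmetric function `h_n ∈ Λ`, defined via the generating
function `∑_{n≥0} h_n z^n = exp (∑_{n≥1} p_n z^n / n)`; in particular `h_0 = 1`. -/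
noncomputable def hPoly (n : ℕ) : Lam :=
  PowerSeries.coeff n
    (psExp (PowerSeries.mk fun k => if k = 0 then 0 else (k : ℚ)⁻¹ • pVar k))

/-- The quantity `z_λ = ∏ᵢ i^{mᵢ(λ)} mᵢ(λ)!` attached to the monomial `p_λ = ∏ p_i^{mᵢ}`. -/
noncomputable def zWeight (d : ℕ →₀ ℕ) : ℚ :=
  d.prod fun n k => ((n : ℚ) + 1) ^ k * (k.factorial : ℚ)

/-- The Hall inner product on `Λ`, for which `⟨p_λ, p_μ⟩ = z_λ δ_{λμ}` (equivalently, the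
Schur functions form an orthonormal basis). -/
noncomputable def hallForm (f g : Lam) : ℚ :=
  ∑ d ∈ f.support, MvPolynomial.coeff d f * MvPolynomial.coeff d g * zWeight d

/-- Multiplication by `h_n` as a linear operator on `Λ`. -/
noncomputable def hMul (n : ℕ) : Module.End ℚ Lam := LinearMap.mulLeft ℚ (hPoly n)


/-!
Adjoining one variable `t` to the alphabet, `f ↦ f(p_k + t^k)`, is a ring homomorphism
`Λ → Λ[t]`, and its `t^m`-coefficient is `h_m^⊥`. This is checked on the generators `p_k`: the
Hall adjoint of multiplication by `p_k` is `k ∂/∂p_k`, and `k ∂h_m/∂p_k = h_{m-k}`. Since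
`∑ h_n z^n = exp (∑ p_k z^k / k)`, adjoining `t` multiplies this series by
`exp (-log (1 - t z)) = 1 / (1 - t z)`, so `h_n ↦ ∑_b h_{n-b} t^b`. Multiplicativity then gives
`h_m^⊥ h_n = ∑_a h_{n-a} h_{m-a}^⊥`, and the relation follows by splitting off the term `a = 0`.

The identities for the exponential of a power series all come from the chain rule
`D (exp F) = exp F · D F` for a derivation `D` and from uniqueness of solutions of `Y' = H Y`.
-/

open Finset

noncomputable def expTrunc {S : Type*} [CommRing S] [Algebra ℚ S] (n : ℕ) (a : S) : S :=
  ∑ k ∈ range n, (k.factorial : ℚ)⁻¹ • a ^ k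

theorem expTrunc_succ {S : Type*} [CommRing S] [Algebra ℚ S] (n : ℕ) (a : S) :
    expTrunc (n + 1) a = expTrunc n a + (n.factorial : ℚ)⁻¹ • a ^ n :=
  sum_range_succ _ _

theorem Derivation.map_expTrunc_succ {R S : Type*} [CommRing R] [CommRing S] [Algebra R S]
    [Algebra ℚ S] (D : Derivation R S S) (a : S) (n : ℕ) :
    D (expTrunc (n + 1) a) = expTrunc n a * D a := by
  induction n with
  | zero => simp [expTrunc]
  | succ n ih =>
    rw [expTrunc_succ, map_add, ih, expTrunc_succ n, add_mul, map_rat_smul, D.leibniz_pow,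
      Nat.add_sub_cancel, ← Nat.cast_smul_eq_nsmul ℚ, smul_smul, smul_eq_mul, smul_mul_assoc]
    congr 2
    rw [Nat.factorial_succ]
    push_cast
    field_simp

noncomputable def Derivation.mapPowerSeries {R A : Type*} [CommRing R] [CommRing A]
    [Algebra R A] (D : Derivation R A A) : Derivation R A⟦X⟧ A⟦X⟧ :=
  Derivation.mk'
    { toFun := fun F => PowerSeries.mk fun n => D (PowerSeries.coeff n F)
      map_add' := fun F G => by ext n; simp
      map_smul' := fun r F => by ext n; simp }
    fun F G => by
      ext n
      simp only [LinearMap.coe_mk, AddHom.coe_mk, coeff_mk, smul_eq_mul, map_add]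
      rw [mul_comm G, PowerSeries.coeff_mul, PowerSeries.coeff_mul, PowerSeries.coeff_mul,
        map_sum, ← sum_add_distrib]
      refine sum_congr rfl fun ij _ => ?_
      rw [D.leibniz, smul_eq_mul, smul_eq_mul, coeff_mk, coeff_mk]
      ring

theorem Derivation.coeff_mapPowerSeries {R A : Type*} [CommRing R] [CommRing A] [Algebra R A]
    (D : Derivation R A A) (F : A⟦X⟧) (n : ℕ) :
    PowerSeries.coeff n (D.mapPowerSeries F) = D (PowerSeries.coeff n F) := by
  simp [Derivation.mapPowerSeries]

namespace PowerSeries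

variable {A : Type*} [CommRing A]

theorem coeff_pow_of_lt {F : A⟦X⟧} (hF : constantCoeff F = 0) {N k : ℕ} (h : N < k) :
    coeff N (F ^ k) = 0 := by
  obtain ⟨G, rfl⟩ := X_dvd_iff.mpr hF
  rw [mul_pow, coeff_X_pow_mul', if_neg (by omega)]

variable [Algebra ℚ A]

/-- `exp ∘ F`. Only meaningful when `constantCoeff F = 0`, which makes the truncation of the
exponential series at `N` exact in degree `N`. -/
noncomputable def expSubst (F : A⟦X⟧) : A⟦X⟧ :=
  mk fun N => ∑ k ∈ range (N + 1), (k.factorial : ℚ)⁻¹ • coeff N (F ^ k)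

theorem coeff_expSubst_eq_coeff_expTrunc {F : A⟦X⟧} (hF : constantCoeff F = 0) {N n : ℕ}
    (h : N < n) : coeff N (expSubst F) = coeff N (expTrunc n F) := by
  rw [expSubst, coeff_mk, expTrunc, map_sum]
  simp_rw [map_rat_smul]
  refine sum_subset (range_subset_range.2 h) fun k _ hk => ?_
  rw [mem_range, not_lt] at hk
  rw [coeff_pow_of_lt hF hk, smul_zero]

theorem constantCoeff_expSubst (F : A⟦X⟧) : constantCoeff (expSubst F) = 1 := by
  simp [expSubst]

theorem expSubst_zero : expSubst (0 : A⟦X⟧) = 1 := by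
  ext N
  rw [expSubst, coeff_mk, sum_eq_single 0 (fun k _ hk => by rw [zero_pow hk, map_zero, smul_zero])
    (by simp)]
  simp

theorem map_expSubst {B : Type*} [CommRing B] [Algebra ℚ B] (φ : A →+* B) (F : A⟦X⟧) :
    map φ (expSubst F) = expSubst (map φ F) := by
  ext N
  simp only [expSubst, coeff_map, coeff_mk, map_sum, map_rat_smul, ← map_pow]

/-- The locality hypothesis on `D` (degree `N` of `D G` only sees `G` up to degree `N + 1`) holds
both for `d⁄dX` and for derivations acting coefficientwise. -/
theorem _root_.Derivation.map_expSubst {R : Type*} [CommRing R] [Algebra R A⟦X⟧]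
    (D : Derivation R A⟦X⟧ A⟦X⟧)
    (hD : ∀ N G, (∀ k ≤ N + 1, coeff k G = 0) → coeff N (D G) = 0)
    {F : A⟦X⟧} (hF : constantCoeff F = 0) : D (expSubst F) = expSubst F * D F := by
  ext N
  have htrunc : coeff N (D (expSubst F)) = coeff N (D (expTrunc (N + 2) F)) := by
    rw [← sub_eq_zero, ← map_sub, ← map_sub]
    exact hD N _ fun k hk => by
      rw [map_sub, coeff_expSubst_eq_coeff_expTrunc hF (n := N + 2) (by omega), sub_self]
  rw [htrunc, D.map_expTrunc_succ, coeff_mul, coeff_mul]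
  refine sum_congr rfl fun ij hij => ?_
  rw [HasAntidiagonal.mem_antidiagonal] at hij
  rw [coeff_expSubst_eq_coeff_expTrunc hF (n := N + 1) (by omega)]

theorem derivative_expSubst {F : A⟦X⟧} (hF : constantCoeff F = 0) :
    d⁄dX A (expSubst F) = expSubst F * d⁄dX A F :=
  (d⁄dX A).map_expSubst (fun N G hG => by rw [coeff_derivative, hG (N + 1) le_rfl, zero_mul]) hF

theorem eq_zero_of_derivative_eq_mul {Y H : A⟦X⟧} (h0 : constantCoeff Y = 0)
    (h : d⁄dX A Y = H * Y) : Y = 0 := by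
  ext n
  induction n using Nat.strong_induction_on with
  | _ n ih =>
  cases n with
  | zero => simpa using h0
  | succ n =>
    have hc := congrArg (coeff n) h
    rw [coeff_derivative, coeff_mul, sum_eq_zero fun ij hij => by
      rw [HasAntidiagonal.mem_antidiagonal] at hij
      rw [ih ij.2 (by omega), map_zero, mul_zero]] at hc
    rw [mul_comm, ← Nat.cast_succ, ← nsmul_eq_mul, ← Nat.cast_smul_eq_nsmul ℚ] at hc
    rw [map_zero]
    exact (smul_eq_zero.mp hc).resolve_left (by positivity)

theorem expSubst_add {F G : A⟦X⟧} (hF : constantCoeff F = 0) (hG : constantCoeff G = 0) :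
    expSubst (F + G) = expSubst F * expSubst G := by
  have hFG : constantCoeff (F + G) = 0 := by rw [map_add, hF, hG, add_zero]
  rw [← sub_eq_zero]
  refine eq_zero_of_derivative_eq_mul (H := d⁄dX A (F + G)) (by simp [constantCoeff_expSubst]) ?_
  rw [map_sub, Derivation.leibniz, derivative_expSubst hF, derivative_expSubst hG,
    derivative_expSubst hFG, smul_eq_mul, smul_eq_mul, map_add]
  ring

/-- `exp (-log (1 - c X)) = 1 / (1 - c X)`; the constant term vanishes because `(0 : ℚ)⁻¹ = 0`. -/
theorem expSubst_inv_smul_pow (c : A) :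
    expSubst (mk fun k => (k : ℚ)⁻¹ • c ^ k) = mk fun k => c ^ k := by
  set L : A⟦X⟧ := mk fun k => (k : ℚ)⁻¹ • c ^ k
  have hL : constantCoeff L = 0 := by simp [L]
  have hdL : d⁄dX A L = mk fun k => c ^ (k + 1) := by
    ext k
    rw [coeff_derivative, coeff_mk, coeff_mk, smul_mul_assoc, mul_comm, ← Nat.cast_succ,
      ← nsmul_eq_mul, ← Nat.cast_smul_eq_nsmul ℚ, smul_smul, inv_mul_cancel₀ (by positivity),
      one_smul]
  rw [← sub_eq_zero]
  refine eq_zero_of_derivative_eq_mul (H := d⁄dX A L) (by simp [constantCoeff_expSubst]) ?_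
  rw [map_sub, derivative_expSubst hL, mul_sub, mul_comm]
  congr 1
  ext k
  rw [hdL, coeff_derivative, coeff_mul, coeff_mk]
  simp only [coeff_mk, ← pow_add]
  have hdeg : ∀ ij ∈ antidiagonal k, c ^ (ij.1 + 1 + ij.2) = c ^ (k + 1) := fun ij hij => by
    rw [HasAntidiagonal.mem_antidiagonal] at hij
    rw [show ij.1 + 1 + ij.2 = k + 1 by omega]
  rw [sum_congr rfl hdeg, sum_const, Nat.card_antidiagonal, nsmul_eq_mul, mul_comm]
  push_cast
  ring

end PowerSeries

theorem zWeight_pos (d : ℕ →₀ ℕ) : 0 < zWeight d :=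
  Finset.prod_pos fun n _ => by positivity

theorem zWeight_add_single (d : ℕ →₀ ℕ) (i : ℕ) :
    zWeight (d + Finsupp.single i 1) = ((i : ℚ) + 1) * ((d i : ℚ) + 1) * zWeight d := by
  unfold zWeight
  rw [← Finsupp.mul_prod_erase' (d + _) i _ (by simp), ← Finsupp.mul_prod_erase' d i _ (by simp),
    Finsupp.erase_add, Finsupp.erase_single, add_zero]
  simp [Nat.factorial_succ]
  ring

theorem hallForm_eq_sum {f : Lam} (g : Lam) {S : Finset (ℕ →₀ ℕ)} (hS : f.support ⊆ S) :
    hallForm f g = ∑ d ∈ S, MvPolynomial.coeff d f * MvPolynomial.coeff d g * zWeight d :=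
  sum_subset hS fun d _ hd => by rw [MvPolynomial.notMem_support_iff.mp hd, zero_mul, zero_mul]

theorem hallForm_comm (f g : Lam) : hallForm f g = hallForm g f := by
  rw [hallForm_eq_sum g subset_union_left, hallForm_eq_sum f (subset_union_right (s₁ := f.support))]
  exact sum_congr rfl fun d _ => by ring

@[simp]
theorem hallForm_zero_left (g : Lam) : hallForm 0 g = 0 := by
  simp [hallForm]

@[simp]
theorem hallForm_zero_right (f : Lam) : hallForm f 0 = 0 := by
  simp [hallForm]

theorem hallForm_add_left (f₁ f₂ g : Lam) :
    hallForm (f₁ + f₂) g = hallForm f₁ g + hallForm f₂ g := by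
  classical
  rw [hallForm_eq_sum g MvPolynomial.support_add, hallForm_eq_sum g subset_union_left,
    hallForm_eq_sum g subset_union_right, ← sum_add_distrib]
  exact sum_congr rfl fun d _ => by rw [MvPolynomial.coeff_add]; ring

theorem hallForm_add_right (f g₁ g₂ : Lam) :
    hallForm f (g₁ + g₂) = hallForm f g₁ + hallForm f g₂ := by
  rw [hallForm_comm, hallForm_add_left, hallForm_comm g₁, hallForm_comm g₂]

theorem hallForm_C_left (a : ℚ) (g : Lam) :
    hallForm (MvPolynomial.C a) g = a * MvPolynomial.constantCoeff g := by
  classical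
  rw [MvPolynomial.C_apply, hallForm_eq_sum g MvPolynomial.support_monomial_subset, sum_singleton,
    MvPolynomial.coeff_monomial, if_pos rfl, MvPolynomial.constantCoeff_eq]
  simp [zWeight]

theorem hallForm_self_pos {f : Lam} (hf : f ≠ 0) : 0 < hallForm f f :=
  sum_pos (fun d hd => mul_pos (mul_self_pos.mpr (MvPolynomial.mem_support_iff.mp hd))
    (zWeight_pos d)) (MvPolynomial.support_nonempty.mpr hf)

theorem eq_of_hallForm_eq {f f' : Lam} (h : ∀ g, hallForm f g = hallForm f' g) : f = f' := by
  have hsub : ∀ g, hallForm (f - f') g = 0 := fun g => by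
    have := hallForm_add_left (f - f') f' g
    rw [sub_add_cancel, h] at this
    linarith
  by_contra hne
  exact (hallForm_self_pos (sub_ne_zero.mpr hne)).ne' (hsub _)

theorem hallForm_X_mul (i : ℕ) (f g : Lam) :
    hallForm (MvPolynomial.X i * f) g = hallForm f (((i : ℚ) + 1) • pderiv i g) := by
  rw [hallForm, support_X_mul, sum_map, hallForm]
  refine sum_congr rfl fun d _ => ?_
  simp only [addLeftEmbedding_apply, MvPolynomial.coeff_X_mul, MvPolynomial.coeff_smul,
    coeff_pderiv, smul_eq_mul]
  rw [add_comm, zWeight_add_single]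
  ring

noncomputable def powerSumSeries : Lam⟦X⟧ :=
  PowerSeries.mk fun k => if k = 0 then 0 else (k : ℚ)⁻¹ • pVar k

theorem hPoly_eq_coeff_expSubst (n : ℕ) :
    hPoly n = PowerSeries.coeff n (PowerSeries.expSubst powerSumSeries) :=
  rfl

theorem constantCoeff_powerSumSeries : PowerSeries.constantCoeff powerSumSeries = 0 := by
  simp [powerSumSeries]

theorem hPoly_zero : hPoly 0 = 1 := by
  rw [hPoly_eq_coeff_expSubst, coeff_zero_eq_constantCoeff, PowerSeries.constantCoeff_expSubst]

theorem constantCoeff_hPoly (n : ℕ) :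
    MvPolynomial.constantCoeff (hPoly n) = if n = 0 then 1 else 0 := by
  have hmap : PowerSeries.map MvPolynomial.constantCoeff powerSumSeries = 0 := by
    ext k
    simp only [powerSumSeries, pVar, PowerSeries.coeff_map, coeff_mk, map_zero]
    split_ifs <;> simp
  rw [hPoly_eq_coeff_expSubst, ← PowerSeries.coeff_map, PowerSeries.map_expSubst, hmap,
    PowerSeries.expSubst_zero, PowerSeries.coeff_one]

theorem mapPowerSeries_pderiv_powerSumSeries (i : ℕ) :
    (pderiv i).mapPowerSeries powerSumSeries
      = ((i : ℚ) + 1)⁻¹ • (PowerSeries.X : Lam⟦X⟧) ^ (i + 1) := by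
  ext n : 1
  rw [Derivation.coeff_mapPowerSeries, powerSumSeries, coeff_mk, PowerSeries.coeff_smul,
    PowerSeries.coeff_X_pow]
  rcases eq_or_ne n (i + 1) with rfl | hne
  · simp [pVar]
  · rcases eq_or_ne n 0 with rfl | h0
    · simp
    · simp [pVar, pderiv_X, hne, h0, show n - 1 ≠ i by omega]

theorem pderiv_hPoly (i m : ℕ) :
    ((i : ℚ) + 1) • pderiv i (hPoly m) = if i + 1 ≤ m then hPoly (m - (i + 1)) else 0 := by
  have hchain := congrArg (PowerSeries.coeff m) ((pderiv i).mapPowerSeries.map_expSubst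
    (fun N G hG => by rw [Derivation.coeff_mapPowerSeries, hG N (by omega), map_zero])
    constantCoeff_powerSumSeries)
  rw [Derivation.coeff_mapPowerSeries, mapPowerSeries_pderiv_powerSumSeries, mul_smul_comm,
    PowerSeries.coeff_smul, coeff_mul_X_pow'] at hchain
  rw [hPoly_eq_coeff_expSubst, hchain, smul_smul, mul_inv_cancel₀ (by positivity), one_smul]
  rfl

/-- `p_k ↦ p_k + t^k` (the variable `X i` is `p_{i+1}`). -/
noncomputable def addVar : Lam →ₐ[ℚ] Polynomial Lam :=
  aeval fun i => Polynomial.C (MvPolynomial.X i) + Polynomial.X ^ (i + 1)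

theorem addVar_X (i : ℕ) :
    addVar (MvPolynomial.X i) = Polynomial.C (MvPolynomial.X i) + Polynomial.X ^ (i + 1) :=
  aeval_X _ i

theorem addVar_hPoly (n : ℕ) :
    addVar (hPoly n) = ∑ b ∈ range (n + 1), Polynomial.C (hPoly (n - b)) * Polynomial.X ^ b := by
  set T : (Polynomial Lam)⟦X⟧ := PowerSeries.mk fun k => (k : ℚ)⁻¹ • Polynomial.X ^ k
  have hsplit : PowerSeries.map (addVar : Lam →+* Polynomial Lam) powerSumSeries
      = PowerSeries.map Polynomial.C powerSumSeries + T := by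
    ext k : 1
    simp only [PowerSeries.coeff_map, map_add, powerSumSeries, T, PowerSeries.coeff_mk]
    split_ifs with hk
    · simp [hk]
    · simp [pVar, addVar_X, smul_add, Nat.sub_add_cancel (Nat.pos_of_ne_zero hk)]
  have hC : PowerSeries.constantCoeff (PowerSeries.map Polynomial.C powerSumSeries) = 0 := by
    rw [← PowerSeries.coeff_zero_eq_constantCoeff, PowerSeries.coeff_map,
      PowerSeries.coeff_zero_eq_constantCoeff, constantCoeff_powerSumSeries, map_zero]
  have hT : PowerSeries.constantCoeff T = 0 := by simp [T]
  rw [hPoly_eq_coeff_expSubst, ← RingHom.coe_coe addVar, ← PowerSeries.coeff_map,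
    PowerSeries.map_expSubst, hsplit, PowerSeries.expSubst_add hC hT,
    ← PowerSeries.map_expSubst, PowerSeries.expSubst_inv_smul_pow, mul_comm,
    PowerSeries.coeff_mul, Nat.sum_antidiagonal_eq_sum_range_succ_mk]
  simp only [PowerSeries.coeff_mk, PowerSeries.coeff_map, hPoly_eq_coeff_expSubst]
  exact sum_congr rfl fun b _ => mul_comm _ _

theorem coeff_addVar_hPoly (n a : ℕ) :
    (addVar (hPoly n)).coeff a = if a ≤ n then hPoly (n - a) else 0 := by
  simp [addVar_hPoly, Polynomial.finsetSum_coeff]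

noncomputable def skew (m : ℕ) (f : Lam) : Lam :=
  (addVar f).coeff m

theorem skew_C (m : ℕ) (a : ℚ) :
    skew m (MvPolynomial.C a) = if m = 0 then MvPolynomial.C a else 0 := by
  rw [skew, show (MvPolynomial.C a : Lam) = algebraMap ℚ Lam a from rfl, AlgHom.commutes,
    Polynomial.algebraMap_apply, Polynomial.coeff_C]

theorem skew_add (m : ℕ) (f g : Lam) : skew m (f + g) = skew m f + skew m g := by
  rw [skew, map_add, Polynomial.coeff_add, skew, skew]

theorem skew_mul_X (m : ℕ) (f : Lam) (i : ℕ) :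
    skew m (f * MvPolynomial.X i)
      = skew m f * MvPolynomial.X i + if i + 1 ≤ m then skew (m - (i + 1)) f else 0 := by
  rw [skew, map_mul, addVar_X, mul_add, Polynomial.coeff_add, Polynomial.coeff_mul_C,
    Polynomial.coeff_mul_X_pow']
  rfl

theorem hallForm_skew (m : ℕ) (f g : Lam) :
    hallForm (skew m f) g = hallForm f (hPoly m * g) := by
  induction f using MvPolynomial.induction_on generalizing m g with
  | C a =>
    rw [skew_C]
    rcases eq_or_ne m 0 with rfl | hm
    · rw [if_pos rfl, hPoly_zero, one_mul]
    · rw [if_neg hm, hallForm_zero_left, hallForm_C_left, map_mul, constantCoeff_hPoly, if_neg hm,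
        zero_mul, mul_zero]
  | add p q hp hq =>
    rw [skew_add, hallForm_add_left, hallForm_add_left, hp, hq]
  | mul_X p i ih =>
    have hleibniz : ((i : ℚ) + 1) • pderiv i (hPoly m * g)
        = (if i + 1 ≤ m then hPoly (m - (i + 1)) else 0) * g
          + hPoly m * (((i : ℚ) + 1) • pderiv i g) := by
      rw [Derivation.leibniz, smul_eq_mul, smul_eq_mul, smul_add, ← pderiv_hPoly, mul_smul_comm,
        smul_mul_assoc, add_comm, mul_comm g]
    rw [skew_mul_X, hallForm_add_left, mul_comm _ (MvPolynomial.X i), hallForm_X_mul, ih,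
      mul_comm p, hallForm_X_mul, hleibniz, hallForm_add_right, add_comm]
    split_ifs
    · rw [ih]
    · rw [hallForm_zero_left, zero_mul, hallForm_zero_right]

theorem skew_hPoly_mul (m n : ℕ) (f : Lam) :
    skew m (hPoly n * f) = ∑ a ∈ range (min m n + 1), hPoly (n - a) * skew (m - a) f := by
  rw [skew, map_mul, Polynomial.coeff_mul, Nat.sum_antidiagonal_eq_sum_range_succ_mk]
  simp only [coeff_addVar_hPoly, ite_mul, zero_mul]
  rw [← sum_filter]
  refine sum_congr ?_ fun a _ => rfl
  ext a
  simp only [mem_filter, mem_range]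
  omega

/-- Let `h_n` denote multiplication by the `n`-th complete homogeneous symmetric function on
`Λ`, and let `h*_n` be its adjoint with respect to the Hall inner product (the skewing
operator).  Then for all `m, n ≥ 1`: `h*_m ∘ h_n - h_n ∘ h*_m = h*_{m-1} ∘ h_{n-1}`
(with `h_0 = h*_0 = id`; note that the adjointness hypothesis forces `h*_0 = id`). -/
theorem hstar_comp_h_commutation_relation
    (hstar : ℕ → Module.End ℚ Lam)
    (hadj : ∀ (n : ℕ) (f g : Lam), hallForm (hstar n f) g = hallForm f (hPoly n * g))
    (m n : ℕ) (hm : 1 ≤ m) (hn : 1 ≤ n) :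
    hstar m * hMul n - hMul n * hstar m = hstar (m - 1) * hMul (n - 1) := by
  have hstar_eq_skew : ∀ k f, hstar k f = skew k f := fun k f =>
    eq_of_hallForm_eq fun g => by rw [hadj, hallForm_skew]
  refine LinearMap.ext fun f => ?_
  simp only [LinearMap.sub_apply, Module.End.mul_apply, hMul, LinearMap.mulLeft_apply,
    hstar_eq_skew, skew_hPoly_mul]
  rw [show min m n + 1 = min (m - 1) (n - 1) + 1 + 1 by omega, sum_range_succ', Nat.sub_zero,
    Nat.sub_zero, add_sub_cancel_right]
  refine sum_congr rfl fun a _ => ?_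
  rw [show n - (a + 1) = n - 1 - a by omega, show m - (a + 1) = m - 1 - a by omega]
end
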